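/- arXiv:2510.17126 — 3 statements merged into one kernel-verified Lean document; each statement's English description precedes it below -/
import Mathlib

section
/- Suppose V : ℝ → ℝ is continuous with 0 < Vmin ≤ V(x) ≤ Vmax, u : ℝ → ℝ is continuous, a > 0, and τ : ℝ → ℝ is a differentiable function satisfying ∫_{t-τ(t)}^{t} V(u(s)) ds = a for all t. Then d/dt (t − τ(t)) = V(u(t)) / V(u(t − τ(t))), and consequently 0 < Vmin/Vmax ≤ d/dt(t − τ(t)) ≤ Vmax/Vmin; in particular t ↦ t − τ(t) is strictly increasing. -/
theorem stmt2 (V u τ : ℝ → ℝ) (Vmin Vmax a : ℝ)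
    (hVmin : 0 < Vmin) (hV : ∀ x, Vmin ≤ V x ∧ V x ≤ Vmax)
    (hVc : Continuous V) (huc : Continuous u) (ha : 0 < a)
    (hτd : Differentiable ℝ τ)
    (hthr : ∀ t, (∫ s in (t - τ t)..t, V (u s)) = a) :
    (∀ t, deriv (fun s => s - τ s) t = V (u t) / V (u (t - τ t))) ∧
    (∀ t, Vmin / Vmax ≤ deriv (fun s => s - τ s) t ∧
      deriv (fun s => s - τ s) t ≤ Vmax / Vmin) ∧
    StrictMono (fun t => t - τ t) := by
  set g : ℝ → ℝ := fun s => s - τ s with hg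
  have hgd : Differentiable ℝ g := differentiable_id.sub hτd
  have hc : Continuous (fun s => V (u s)) := hVc.comp huc
  have hVpos : ∀ x, 0 < V x := fun x => lt_of_lt_of_le hVmin (hV x).1
  set F : ℝ → ℝ := fun x => ∫ s in (0:ℝ)..x, V (u s) with hF
  have hFd : ∀ x, HasDerivAt F (V (u x)) x := fun x =>
    (intervalIntegral.integral_hasDerivAt_right (hc.intervalIntegrable 0 x)
      (hc.stronglyMeasurableAtFilter _ _) hc.continuousAt)
  have key : ∀ t, F t - F (g t) = a := by
    intro t
    have h := hthr t
    simp only [hF]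
    rw [intervalIntegral.integral_interval_sub_left
      (hc.intervalIntegrable 0 t) (hc.intervalIntegrable 0 (g t))]
    exact h
  have hderiv : ∀ t, HasDerivAt g (V (u t) / V (u (g t))) t := by
    intro t
    have h1 : HasDerivAt (fun s => F (g s)) (V (u (g t)) * deriv g t) t :=
      (hFd (g t)).comp t (hgd t).hasDerivAt
    have h2 : (fun s => F (g s)) = fun s => F s - a := by
      funext s; have := key s; linarith
    have h3 : HasDerivAt (fun s => F s - a) (V (u t)) t := (hFd t).sub_const a
    rw [h2] at h1
    have heq : V (u (g t)) * deriv g t = V (u t) := h1.unique h3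
    have hne : V (u (g t)) ≠ 0 := ne_of_gt (hVpos _)
    have : deriv g t = V (u t) / V (u (g t)) := by
      rw [eq_div_iff hne, mul_comm]; exact heq
    exact this ▸ (hgd t).hasDerivAt
  have hderiv' : ∀ t, deriv g t = V (u t) / V (u (g t)) := fun t => (hderiv t).deriv
  refine ⟨hderiv', ?_, ?_⟩
  · intro t
    rw [hderiv' t]
    have h1 := hV (u t); have h2 := hV (u (g t))
    have hVmax : 0 < Vmax := lt_of_lt_of_le hVmin ((hV 0).1.trans (hV 0).2)
    exact ⟨div_le_div₀ (hVpos _).le h1.1 (hVpos _) h2.2,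
      div_le_div₀ hVmax.le h1.2 hVmin h2.1⟩
  · apply strictMono_of_deriv_pos
    intro t
    rw [hderiv' t]
    exact div_pos (hVpos _) (hVpos _)
end

section
/- Define φ : ℝ → ℝ by φ(t) = −1 for t ≤ −1, φ(t) = (3/2)(t+1)^{1/3} − 1 for −1 < t ≤ −7/8, and φ(t) = (10/7)t + 1 for −7/8 < t ≤ 0. Then both u₁(t) = 1 + t (for t ≥ 0) and u₂(t) = 1 + t − t^{3/2} (for 0 ≤ t ≤ 1/4) satisfy u(0) = φ(0) = 1 and u'(t) = −u(t − |u(t)|) for t in their respective domains (with u(s) = φ(s) for s ≤ 0). Hence the initial value problem for the state-dependent DDE u'(t) = −u(t − |u(t)|) with initial history φ has two distinct solutions. -/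
/-! For `u₁ = 1 + t` the delayed argument `t - |u₁ t|` is constantly `-1`, where the history is
`-1`, so `u₁' = 1 = -φ(-1)`. For `u₂ = 1 + t - t^(3/2)` the delayed argument is `-1 + t^(3/2)`,
which stays in the cube-root piece `(-1, -7/8]` of `φ` while `t ≤ 1/4`; there
`-φ(-1 + t^(3/2)) = 1 - (3/2) (t^(3/2))^(1/3) = 1 - (3/2) √t = u₂'`. -/

open Real Filter Topology

noncomputable def phi8 (t : ℝ) : ℝ :=
  if t ≤ -1 then -1
  else if t ≤ -7/8 then (3/2) * (t + 1) ^ ((1:ℝ)/3) - 1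
  else (10/7) * t + 1

noncomputable def u8a (t : ℝ) : ℝ := if t < 0 then phi8 t else 1 + t

noncomputable def u8b (t : ℝ) : ℝ := if t < 0 then phi8 t else 1 + t - t ^ ((3:ℝ)/2)

lemma hasDerivAt_ite_lt_of_lt {f g : ℝ → ℝ} {a t g' : ℝ} (ht : a < t) (hg : HasDerivAt g g' t) :
    HasDerivAt (fun s => if s < a then f s else g s) g' t :=
  hg.congr_of_eventuallyEq <| by
    filter_upwards [eventually_gt_nhds ht] with s hs
    rw [if_neg hs.le.not_gt]

lemma one_quarter_rpow_three_halves : ((1:ℝ)/4) ^ ((3:ℝ)/2) = 1/8 := by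
  rw [show (1/4:ℝ) = (1/2) ^ (2:ℕ) by norm_num, ← rpow_natCast, ← rpow_mul (by norm_num),
    show ((2:ℕ):ℝ) * (3/2) = (3:ℕ) by norm_num, rpow_natCast]
  norm_num

lemma rpow_three_halves_le_one_eighth {t : ℝ} (h0 : 0 ≤ t) (h1 : t ≤ 1/4) :
    t ^ ((3:ℝ)/2) ≤ 1/8 :=
  one_quarter_rpow_three_halves ▸ rpow_le_rpow h0 h1 (by norm_num)

section

variable {t : ℝ}

lemma phi8_of_le (ht : t ≤ -1) : phi8 t = -1 := if_pos ht

lemma phi8_of_mem_Ioc (h1 : -1 < t) (h2 : t ≤ -7/8) :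
    phi8 t = 3/2 * (t + 1) ^ ((1:ℝ)/3) - 1 := by
  rw [phi8, if_neg h1.not_ge, if_pos h2]

lemma u8a_of_neg (ht : t < 0) : u8a t = phi8 t := if_pos ht

lemma u8a_of_nonneg (ht : 0 ≤ t) : u8a t = 1 + t := if_neg ht.not_gt

lemma u8b_of_neg (ht : t < 0) : u8b t = phi8 t := if_pos ht

lemma u8b_of_nonneg (ht : 0 ≤ t) : u8b t = 1 + t - t ^ ((3:ℝ)/2) := if_neg ht.not_gt

lemma u8a_hasDerivAt (ht : 0 < t) : HasDerivAt u8a (-u8a (t - |u8a t|)) t := by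
  have hdelay : t - |u8a t| = -1 := by
    rw [u8a_of_nonneg ht.le, abs_of_pos (by linarith)]; ring
  rw [hdelay, u8a_of_neg (by norm_num), phi8_of_le le_rfl, neg_neg]
  exact hasDerivAt_ite_lt_of_lt ht ((hasDerivAt_id' t).const_add 1)

lemma u8b_hasDerivAt (ht : 0 < t) (ht' : t ≤ 1/4) : HasDerivAt u8b (-u8b (t - |u8b t|)) t := by
  have hsmall : t ^ ((3:ℝ)/2) ≤ 1/8 := rpow_three_halves_le_one_eighth ht.le ht'
  have hpos : 0 < t ^ ((3:ℝ)/2) := rpow_pos_of_pos ht _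
  have hdelay : t - |u8b t| = -1 + t ^ ((3:ℝ)/2) := by
    rw [u8b_of_nonneg ht.le, abs_of_pos (by linarith)]; ring
  have hhistory : u8b (-1 + t ^ ((3:ℝ)/2)) = 3/2 * t ^ ((1:ℝ)/2) - 1 := by
    rw [u8b_of_neg (by linarith), phi8_of_mem_Ioc (by linarith) (by linarith),
      neg_add_cancel_comm, ← rpow_mul ht.le]
    norm_num
  rw [hdelay, hhistory]
  refine hasDerivAt_ite_lt_of_lt ht <|
    (((hasDerivAt_id' t).const_add 1).sub (hasDerivAt_rpow_const (p := 3/2) (Or.inl ht.ne'))).congr_deriv ?_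
  norm_num

end

theorem stmt8 :
    phi8 0 = 1 ∧ u8a 0 = 1 ∧ u8b 0 = 1 ∧
    (∀ t : ℝ, 0 < t → HasDerivAt u8a (-(u8a (t - |u8a t|))) t) ∧
    (∀ t : ℝ, 0 < t → t < 1/4 → HasDerivAt u8b (-(u8b (t - |u8b t|))) t) ∧
    (∃ t : ℝ, 0 < t ∧ t ≤ 1/4 ∧ u8a t ≠ u8b t) := by
  refine ⟨by norm_num [phi8], by simp [u8a_of_nonneg], by simp [u8b_of_nonneg],
    fun _ => u8a_hasDerivAt, fun _ h0 h1 => u8b_hasDerivAt h0 h1.le,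
    ⟨1/4, by norm_num, le_rfl, ?_⟩⟩
  rw [u8a_of_nonneg (by norm_num), u8b_of_nonneg (by norm_num), one_quarter_rpow_three_halves]
  norm_num
end

section
/- Consider the DDE u'(t) = −γ u(t) − κ₁ u(t − a₁ − c₁ u(t)) − κ₂ u(t − a₂ − c₂ u(t)) with positive parameters γ, κ₁, κ₂, a₁, a₂, c₁, c₂ and a₁/c₁ ≤ a₂/c₂. Suppose at a time t the solution satisfies u(t) = −a₁/c₁, u(t − a₂ − c₂u(t)) < (a₁/(γ c₁))(κ₁ + κ₂), and γ > κ₂. Then u'(t) > 0. -/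
theorem stmt14 (u : ℝ → ℝ) (γ κ₁ κ₂ a₁ a₂ c₁ c₂ t : ℝ)
    (hγ : 0 < γ) (hκ₁ : 0 < κ₁) (hκ₂ : 0 < κ₂)
    (ha₁ : 0 < a₁) (ha₂ : 0 < a₂) (hc₁ : 0 < c₁) (hc₂ : 0 < c₂)
    (horder : a₁ / c₁ ≤ a₂ / c₂) (hγκ : κ₂ < γ)
    (hdde : deriv u t =
      -γ * u t - κ₁ * u (t - a₁ - c₁ * u t) - κ₂ * u (t - a₂ - c₂ * u t))
    (hu : u t = -a₁ / c₁)
    (hdel : u (t - a₂ - c₂ * u t) < (a₁ / (γ * c₁)) * (κ₁ + κ₂)) :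
    0 < deriv u t := by
  have harg : t - a₁ - c₁ * u t = t := by
    rw [hu]; field_simp; ring
  rw [hdde, harg, hu]
  set v := u (t - a₂ - c₂ * (-a₁ / c₁)) with hv
  rw [hu] at hdel
  have h1 : κ₂ * v < κ₂ * ((a₁ / (γ * c₁)) * (κ₁ + κ₂)) :=
    mul_lt_mul_of_pos_left hdel hκ₂
  have h2 : κ₂ * ((a₁ / (γ * c₁)) * (κ₁ + κ₂)) ≤ (γ + κ₁) * (a₁ / c₁) := by
    have hγc : (0:ℝ) < γ * c₁ := by positivity
    have e1 : κ₂ * ((a₁ / (γ * c₁)) * (κ₁ + κ₂)) = (κ₂ * a₁ * (κ₁ + κ₂)) / (γ * c₁) := by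
      ring
    have e2 : (γ + κ₁) * (a₁ / c₁) = ((γ + κ₁) * a₁) / c₁ := by ring
    rw [e1, e2, div_le_div_iff₀ hγc hc₁]
    nlinarith [mul_nonneg (mul_nonneg ha₁.le hc₁.le) (mul_pos (sub_pos.2 hγκ) (by positivity : (0:ℝ) < γ + κ₂ + κ₁)).le]
  have h3 : κ₂ * v < (γ + κ₁) * (a₁ / c₁) := h1.trans_le h2
  have hx : 0 < a₁ / c₁ := div_pos ha₁ hc₁
  rw [neg_div]
  nlinarith [hx, h3]
end
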